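/- Suppose a unipotent u (identified with a matrix L) satisfies: there exist infinitely many pairs ((p̄,q̄), t) with (p̄,q̄) ∈ ℤ^ℓ × ℤ^m primitive and t > 0 such that e^{λt}‖p̄ + Lq̄‖_e² + e^{−μt}‖q̄‖_e² ≤ e^{(φ(t) − ημ t)/η}, where φ is strictly increasing and η(λ+μ)·id − φ is strictly increasing. Then for each such pair, ‖q̄‖_e² ≤ e^{φ(t)/η}, hence t ≥ φ^{−1}(2η ln‖q̄‖_e), and consequently ‖p̄ + Lq̄‖_{max} ≤ √s · ‖q̄‖_{max} · e^{−((λ+μ)/2)·φ^{−1}(2η ln ‖q̄‖_{max})}. -/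

import Mathlib

/-!
Both summands on the left of the hypothesis are nonnegative, so each is bounded by the
right-hand side: `‖q̄‖_e² ≤ e^{φ(t)/η}` and `‖p̄ + Lq̄‖_e² ≤ e^{φ(t)/η - (λ+μ)t}`. Taking
logarithms, `φ(u) ≤ η ln ‖q̄‖_e² ≤ φ(t)` forces `u ≤ t`. Since `t ↦ φ(t)/η - (λ+μ)t` is
decreasing, the second bound may then be evaluated at `u` instead of `t`; when
`φ(u) = 2η ln ‖q̄‖_max` it reads `‖q̄‖_max² e^{-(λ+μ)u}`, and `‖·‖_max ≤ ‖·‖_e` finishes.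
-/

open Finset Real

lemma iSup_abs_le_sqrt_sum_sq {ι : Type*} [Fintype ι] (f : ι → ℝ) :
    ⨆ i, |f i| ≤ √(∑ i, f i ^ 2) :=
  Real.iSup_le (fun i => abs_le_sqrt (single_le_sum (fun j _ => sq_nonneg (f j)) (mem_univ i)))
    (sqrt_nonneg _)

lemma one_le_iSup_abs_intCast {ι : Type*} [Finite ι] {q : ι → ℤ} (hq : q ≠ 0) :
    1 ≤ ⨆ i, |(q i : ℝ)| := by
  obtain ⟨j, hj⟩ := Function.ne_iff.mp hq
  calc (1 : ℝ) ≤ |(q j : ℝ)| := by exact_mod_cast Int.one_le_abs hj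
    _ ≤ ⨆ i, |(q i : ℝ)| := le_ciSup (f := fun i => |(q i : ℝ)|) (Set.finite_range _).bddAbove j

lemma le_exp_of_exp_mul_add_exp_neg_mul_le {x y z P Q : ℝ} (hP : 0 ≤ P) (hQ : 0 ≤ Q)
    (h : exp x * P + exp (-y) * Q ≤ exp (z - y)) :
    Q ≤ exp z ∧ P ≤ exp (z - (x + y)) := by
  constructor
  · refine le_of_mul_le_mul_left ?_ (exp_pos (-y))
    calc exp (-y) * Q ≤ exp (z - y) := by nlinarith [exp_pos x]
      _ = exp (-y) * exp z := by rw [← exp_add]; ring_nf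
  · refine le_of_mul_le_mul_left ?_ (exp_pos x)
    calc exp x * P ≤ exp (z - y) := by nlinarith [exp_pos (-y)]
      _ = exp x * exp (z - (x + y)) := by rw [← exp_add]; ring_nf

section

variable {η c : ℝ} {φ : ℝ → ℝ} {Q t u : ℝ}

lemma StrictMono.le_of_le_mul_log_of_le_exp (hφ : StrictMono φ) (hη : 0 < η) (hQ : 0 < Q)
    (hQt : Q ≤ exp (φ t / η)) (hu : φ u ≤ η * log Q) : u ≤ t := by
  refine hφ.le_iff_le.mp (hu.trans ?_)
  calc η * log Q ≤ η * (φ t / η) := by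
        gcongr
        simpa using log_le_log hQ hQt
    _ = φ t := mul_div_cancel₀ _ hη.ne'

lemma exp_div_sub_mul_le_of_le (hη : 0 < η) (hφ : Monotone fun t => η * c * t - φ t)
    (hut : u ≤ t) : exp (φ t / η - c * t) ≤ exp (φ u / η - c * u) := by
  have h := hφ hut
  simp only at h
  rw [exp_le_exp, ← sub_nonneg]
  have : φ u / η - c * u - (φ t / η - c * t) = (η * c * t - φ t - (η * c * u - φ u)) / η := by
    field_simp
    ring
  rw [this]
  exact div_nonneg (by linarith) hη.le

end

theorem stmt17_general (ℓ m : ℕ) (hl : 1 ≤ ℓ) (hm : 1 ≤ m)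
    (η lam mu : ℝ)
    (hη : η = Real.sqrt ((ℓ + m : ℝ) / ((ℓ + m : ℝ) - 1)))
    (L : Matrix (Fin ℓ) (Fin m) ℝ) (φ : ℝ → ℝ)
    (hφ : StrictMono φ)
    (hφ2 : StrictMono (fun t : ℝ => η * (lam + mu) * t - φ t))
    (p : Fin ℓ → ℤ) (q : Fin m → ℤ) (hq : q ≠ 0) (t : ℝ)
    (hineq : Real.exp (lam * t) *
          (∑ i, ((p i : ℝ) + L.mulVec (fun j => (q j : ℝ)) i) ^ 2)
        + Real.exp (-mu * t) * (∑ j, ((q j : ℝ)) ^ 2)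
        ≤ Real.exp ((φ t - η * mu * t) / η)) :
    (∑ j, ((q j : ℝ)) ^ 2 ≤ Real.exp (φ t / η)) ∧
    (∀ u : ℝ, φ u = 2 * η * Real.log (Real.sqrt (∑ j, ((q j : ℝ)) ^ 2)) → u ≤ t) ∧
    (∀ u : ℝ, φ u = 2 * η * Real.log (⨆ j, |(q j : ℝ)|) →
      (⨆ i, |(p i : ℝ) + L.mulVec (fun j => (q j : ℝ)) i|)
        ≤ Real.sqrt (ℓ + m) * (⨆ j, |(q j : ℝ)|) *
            Real.exp (-((lam + mu) / 2) * u)) := by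
  set P := ∑ i, ((p i : ℝ) + L.mulVec (fun j => (q j : ℝ)) i) ^ 2
  set Q := ∑ j, ((q j : ℝ)) ^ 2
  set M := ⨆ j, |(q j : ℝ)|
  have hs : (2 : ℝ) ≤ ℓ + m := by norm_cast; omega
  have hη_pos : 0 < η := hη ▸ sqrt_pos.2 (div_pos (by linarith) (by linarith))
  have hM : 1 ≤ M := one_le_iSup_abs_intCast hq
  have hMQ : M ≤ √Q := iSup_abs_le_sqrt_sum_sq _
  have hQ : 0 < Q := by linarith [one_le_sqrt.1 (hM.trans hMQ)]
  have hineq' : exp (lam * t) * P + exp (-(mu * t)) * Q ≤ exp (φ t / η - mu * t) := by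
    convert hineq using 3
    · rw [neg_mul]
    · field_simp
  obtain ⟨hQt, hPt⟩ :=
    le_exp_of_exp_mul_add_exp_neg_mul_le (sum_nonneg fun i _ => sq_nonneg _) hQ.le hineq'
  have hle_t : ∀ u, φ u ≤ η * log Q → u ≤ t :=
    fun u => hφ.le_of_le_mul_log_of_le_exp hη_pos hQ hQt
  refine ⟨hQt, fun u hu => hle_t u (le_of_eq (by rw [hu, log_sqrt hQ.le]; ring)), fun u hu => ?_⟩
  have hφu : φ u / η = 2 * log M := by
    rw [hu]
    field_simp
  have hut : u ≤ t := hle_t u <| by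
    have hlog := log_le_log (by linarith) hMQ
    rw [log_sqrt hQ.le] at hlog
    calc φ u = η * (2 * log M) := by rw [hu]; ring
      _ ≤ η * log Q := by gcongr; linarith
  calc ⨆ i, |(p i : ℝ) + L.mulVec (fun j => (q j : ℝ)) i| ≤ √P := iSup_abs_le_sqrt_sum_sq _
    _ ≤ √(exp (φ u / η - (lam + mu) * u)) := by
        gcongr
        rw [← add_mul] at hPt
        exact hPt.trans (exp_div_sub_mul_le_of_le hη_pos hφ2.monotone hut)
    _ = M * exp (-((lam + mu) / 2) * u) := by
        have : (2 * log M - (lam + mu) * u) / 2 = log M + -((lam + mu) / 2) * u := by ring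
        rw [← exp_half, hφu, this, exp_add, exp_log (by linarith)]
    _ ≤ √(ℓ + m) * M * exp (-((lam + mu) / 2) * u) := by
        rw [mul_assoc]
        exact le_mul_of_one_le_left (by positivity) (one_le_sqrt.2 (by linarith))

/-- If the unipotent corresponding to `L` satisfies
`e^{λt}‖p̄ + Lq̄‖_e² + e^{-μt}‖q̄‖_e² ≤ e^{(φ(t) - ημt)/η}` at some time `t > 0`, where
`φ` and `η(λ+μ)·id - φ` are strictly increasing, then `‖q̄‖_e² ≤ e^{φ(t)/η}`, hence
`t ≥ φ⁻¹(2η ln ‖q̄‖_e)`, and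
`‖p̄ + Lq̄‖_max ≤ √s · ‖q̄‖_max · e^{-((λ+μ)/2)·φ⁻¹(2η ln ‖q̄‖_max)}`. -/
theorem stmt17 (ℓ m : ℕ) (hl : 1 ≤ ℓ) (hm : 1 ≤ m)
    (η lam mu : ℝ)
    (hη : η = Real.sqrt ((ℓ + m : ℝ) / ((ℓ + m : ℝ) - 1)))
    (hlam : lam = Real.sqrt (m / ((ℓ + m : ℝ) * ℓ)))
    (hmu : mu = Real.sqrt (ℓ / ((ℓ + m : ℝ) * m)))
    (L : Matrix (Fin ℓ) (Fin m) ℝ) (φ : ℝ → ℝ)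
    (hφ : StrictMono φ)
    (hφ2 : StrictMono (fun t : ℝ => η * (lam + mu) * t - φ t))
    (p : Fin ℓ → ℤ) (q : Fin m → ℤ) (hq : q ≠ 0) (t : ℝ) (ht : 0 < t)
    (hineq : Real.exp (lam * t) *
          (∑ i, ((p i : ℝ) + L.mulVec (fun j => (q j : ℝ)) i) ^ 2)
        + Real.exp (-mu * t) * (∑ j, ((q j : ℝ)) ^ 2)
        ≤ Real.exp ((φ t - η * mu * t) / η)) :
    (∑ j, ((q j : ℝ)) ^ 2 ≤ Real.exp (φ t / η)) ∧
    (∀ u : ℝ, φ u = 2 * η * Real.log (Real.sqrt (∑ j, ((q j : ℝ)) ^ 2)) → u ≤ t) ∧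
    (∀ u : ℝ, φ u = 2 * η * Real.log (⨆ j, |(q j : ℝ)|) →
      (⨆ i, |(p i : ℝ) + L.mulVec (fun j => (q j : ℝ)) i|)
        ≤ Real.sqrt (ℓ + m) * (⨆ j, |(q j : ℝ)|) *
            Real.exp (-((lam + mu) / 2) * u)) :=
  stmt17_general ℓ m hl hm η lam mu hη L φ hφ hφ2 p q hq t hineq
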